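/- arXiv:2506.14027 — 6 statements merged into one kernel-verified Lean document; each statement's English description precedes it below -/
import Mathlib

section
/- The set of closed sequences in ℓ∞(M) is not closed: there exists a compact metric space M without isolated points (e.g. M = [0,1]) and a sequence of elements of ℓ∞(M), each of which is closed as a subset of M, converging in the supremum metric to a sequence that is not closed as a subset of M. -/
open Metric Filter Set

noncomputable def pseq : ℕ → unitInterval := fun n =>
  ⟨1 / (n + 1), by
    constructor
    · positivity
    · rw [div_le_one (by positivity)]
      linarith [Nat.cast_nonneg (α := ℝ) n]⟩

lemma pseq_tendsto : Filter.Tendsto pseq Filter.atTop (nhds 0) := by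
  rw [tendsto_subtype_rng]
  have : Filter.Tendsto (fun n : ℕ => 1 / ((n : ℝ) + 1)) Filter.atTop (nhds 0) :=
    tendsto_one_div_add_atTop_nhds_zero_nat
  simpa [pseq] using this

/-- The set of closed sequences in `ℓ∞(M)` is not closed: there is a compact metric space `M`
without isolated points and a sequence of closed sequences converging in the sup metric to a
sequence whose range is not closed. -/
theorem stmt0 :
    ∃ (M : Type) (_ : MetricSpace M) (_ : CompactSpace M),
      (∀ x : M, ¬ IsOpen ({x} : Set M)) ∧
      ∃ (F : ℕ → ℕ → M) (p : ℕ → M),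
        (∀ i, IsClosed (Set.range (F i))) ∧
        Filter.Tendsto (fun i => ⨆ n, dist (F i n) (p n)) Filter.atTop (nhds 0) ∧
        ¬ IsClosed (Set.range p) := by
  refine ⟨unitInterval, inferInstance, inferInstance, ?_, ?_⟩
  · intro x hx
    have hclopen : IsClopen ({x} : Set unitInterval) := ⟨isClosed_singleton, hx⟩
    rcases (isClopen_iff.mp hclopen) with h | h
    · exact (Set.singleton_nonempty x).ne_empty h
    · have h01 : (0 : unitInterval) ≠ 1 := by
        intro he
        have : (0 : ℝ) = 1 := congrArg Subtype.val he
        norm_num at this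
      have h0 : (0 : unitInterval) ∈ ({x} : Set unitInterval) := h ▸ trivial
      have h1 : (1 : unitInterval) ∈ ({x} : Set unitInterval) := h ▸ trivial
      exact h01 (h0.trans h1.symm)
  · refine ⟨fun i n => pseq (min n i), pseq, ?_, ?_, ?_⟩
    · intro i
      have : Set.range (fun n => pseq (min n i)) ⊆ pseq '' (Set.Iic i) := by
        rintro _ ⟨n, rfl⟩
        exact ⟨min n i, Set.mem_Iic.mpr (min_le_right _ _), rfl⟩
      have hfin : (Set.range (fun n => pseq (min n i))).Finite :=
        ((Set.finite_Iic i).image pseq).subset this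
      exact hfin.isClosed
    · have hb : ∀ i, (⨆ n, dist (pseq (min n i)) (pseq n)) ≤ 1 / (i + 1) := by
        intro i
        apply Real.iSup_le _ (by positivity)
        intro n
        rcases le_or_gt n i with h | h
        · simp [min_eq_left h]
          positivity
        · rw [min_eq_right h.le]
          rw [Subtype.dist_eq, Real.dist_eq]
          have hni : (1 : ℝ) / (n + 1) ≤ 1 / (i + 1) := by
            apply one_div_le_one_div_of_le (by positivity)
            have := (Nat.cast_le (α := ℝ)).mpr h.le
            linarith
          simp only [pseq]
          rw [abs_of_nonneg (by linarith)]
          have : (0 : ℝ) ≤ 1 / (n + 1) := by positivity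
          linarith
      have hnn : ∀ i, 0 ≤ ⨆ n, dist (pseq (min n i)) (pseq n) := by
        intro i
        exact Real.iSup_nonneg fun n => dist_nonneg
      exact squeeze_zero hnn hb tendsto_one_div_add_atTop_nhds_zero_nat
    · intro hcl
      have h0 : (0 : unitInterval) ∈ Set.range pseq :=
        hcl.mem_of_tendsto pseq_tendsto (Filter.Eventually.of_forall fun n => ⟨n, rfl⟩)
      rcases h0 with ⟨n, hn⟩
      have : (1 : ℝ) / (n + 1) = 0 := congrArg Subtype.val hn
      have : (0:ℝ) < 1 / (n + 1) := by positivity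
      linarith [congrArg Subtype.val hn, this]
end

section
/- Let M be a compact metric space without isolated points, f a transitive homeomorphism of M, and suppose the set I of points with dense backward orbit is residual. Then the set S¹ of sequences {p_i} ∈ ℓ∞(M) such that (1) {p_i} is closed, (2) its derived set is finite, (3) each p_i has dense backward orbit, and (4) the full orbits O(p_i) are pairwise disjoint, is dense in ℓ∞(M) with the supremum metric. -/
open Metric Filter Set

/-- The derived set (set of accumulation points) of `A`. -/
def der {M : Type*} [TopologicalSpace M] (A : Set M) : Set M :=
  {x | x ∈ closure (A \ {x})}

/-- The iterated (Cantor–Bendixson) derived set `D^o(A)`. -/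
noncomputable def dIter {M : Type*} [TopologicalSpace M] (A : Set M) (o : Ordinal) : Set M :=
  Ordinal.limitRecOn o A (fun _ ih => der ih) (fun o _ ih => ⋂ b : {b : Ordinal // b < o}, ih b b.2)

/-- The full orbit `{f^k x : k ∈ ℤ}` of `x` under the homeomorphism `f`. -/
def fullOrbit {M : Type*} [TopologicalSpace M] (f : M ≃ₜ M) (x : M) : Set M :=
  Set.range fun k : ℤ => (f.toEquiv ^ k) x

/-- The backward orbit `{f^k x : k < 0}` of `x` under the homeomorphism `f`. -/
def backOrbit {M : Type*} [TopologicalSpace M] (f : M ≃ₜ M) (x : M) : Set M :=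
  Set.range fun n : ℕ => (⇑f.symm)^[n + 1] x

/-- `𝔗(i)`: points whose forward orbit first visits the ball `B(p i, ρ i n)` strictly before
every ball `B(p j, ρ j n)`, `j ≠ i`, for infinitely many `n`. -/
def TT {M : Type*} [MetricSpace M] (f : M ≃ₜ M) (p : ℕ → M) (ρ : ℕ → ℕ → ℝ) (i : ℕ) :
    Set M :=
  {x | {n : ℕ | ∃ k : ℕ, (⇑f)^[k] x ∈ Metric.ball (p i) (ρ i n) ∧
      ∀ k' ≤ k, ∀ j, j ≠ i → (⇑f)^[k'] x ∉ Metric.ball (p j) (ρ j n)}.Infinite}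

lemma orbit_comp {M : Type*} [TopologicalSpace M] (f : M ≃ₜ M) (a b : ℤ) (x : M) :
    (f.toEquiv ^ a) ((f.toEquiv ^ b) x) = (f.toEquiv ^ (a + b)) x := by
  rw [zpow_add, Equiv.Perm.mul_apply]

lemma mem_fullOrbit_self {M : Type*} [TopologicalSpace M] (f : M ≃ₜ M) (x : M) :
    x ∈ fullOrbit f x := ⟨0, by simp⟩

lemma fullOrbit_symm {M : Type*} [TopologicalSpace M] {f : M ≃ₜ M} {x y : M}
    (h : y ∈ fullOrbit f x) : x ∈ fullOrbit f y := by
  obtain ⟨k, rfl⟩ := h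
  refine ⟨-k, ?_⟩
  show (f.toEquiv ^ (-k)) ((f.toEquiv ^ k) x) = x
  rw [orbit_comp]; simp

lemma fullOrbit_trans {M : Type*} [TopologicalSpace M] {f : M ≃ₜ M} {x y z : M}
    (h1 : z ∈ fullOrbit f y) (h2 : y ∈ fullOrbit f x) : z ∈ fullOrbit f x := by
  obtain ⟨a, ha⟩ := h1
  obtain ⟨b, hb⟩ := h2
  refine ⟨a + b, ?_⟩
  show (f.toEquiv ^ (a + b)) x = z
  rw [← orbit_comp]
  simp only at hb ha
  rw [hb, ha]

lemma compl_countable_mem_residual {M : Type*} [TopologicalSpace M] [T1Space M]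
    (hM : ∀ x : M, ¬ IsOpen ({x} : Set M)) {s : Set M} (hs : s.Countable) :
    sᶜ ∈ residual M := by
  have h : sᶜ = ⋂ x ∈ s, ({x}ᶜ : Set M) := by
    ext y
    simp only [mem_compl_iff, mem_iInter, mem_singleton_iff]
    exact ⟨fun h x hx hxy => h (hxy ▸ hx), fun h hy => h y hy rfl⟩
  rw [h]
  exact (countable_bInter_mem hs).2 fun x _ =>
    residual_of_dense_open isOpen_compl_singleton
      (dense_compl_singleton_iff_not_open.2 (hM x))

theorem stmt3 {M : Type*} [MetricSpace M] [CompactSpace M]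
    (hM : ∀ x : M, ¬ IsOpen ({x} : Set M)) (f : M ≃ₜ M)
    (htrans : ∀ U V : Set M, IsOpen U → IsOpen V → U.Nonempty → V.Nonempty →
      ∃ n : ℕ, ((⇑f)^[n] '' U ∩ V).Nonempty)
    (hI : {x : M | Dense (backOrbit f x)} ∈ residual M) :
    ∀ (p : ℕ → M) (ε : ℝ), 0 < ε →
      ∃ q : ℕ → M,
        IsClosed (Set.range q) ∧
        (der (Set.range q)).Finite ∧
        (∀ i, Dense (backOrbit f (q i))) ∧
        (∀ i j, i ≠ j → Disjoint (fullOrbit f (q i)) (fullOrbit f (q j))) ∧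
        (∀ i, dist (q i) (p i) < ε) := by
  classical
  intro p ε hε
  have hne : Nonempty M := ⟨p 0⟩
  -- finite ε/4-net
  obtain ⟨t, htf, htc⟩ :=
    Metric.totallyBounded_iff.1 (isCompact_univ : IsCompact (Set.univ : Set M)).totallyBounded (ε/4) (by positivity)
  have hσ : ∀ i : ℕ, ∃ y, y ∈ t ∧ dist (p i) y < ε/4 := by
    intro i
    have := htc (mem_univ (p i))
    simpa [Metric.mem_ball] using this
  choose σ hσt hσd using hσ
  -- leader (first index in class) function
  have hex : ∀ i : ℕ, ∃ k, σ k = σ i := fun i => ⟨i, rfl⟩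
  set m : ℕ → ℕ := fun i => Nat.find (hex i) with hm_def
  have hmσ : ∀ i, σ (m i) = σ i := fun i => Nat.find_spec (hex i)
  have hmle : ∀ i, m i ≤ i := fun i => Nat.find_min' (hex i) rfl
  have hmcongr : ∀ i j, σ i = σ j → m i = m j := by
    intro i j h
    exact le_antisymm (Nat.find_min' (hex i) ((hmσ j).trans h.symm))
      (Nat.find_min' (hex j) ((hmσ i).trans h))
  have hmm : ∀ i, m (m i) = m i := fun i => hmcongr _ _ (hmσ i)
  -- radii
  set r : ℕ → ℝ := fun i => min (ε/4) (1/(i+1)) with hr_def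
  have hrpos : ∀ i, 0 < r i := fun i => lt_min (by positivity) (by positivity)
  have hr4 : ∀ i, r i ≤ ε/4 := fun i => min_le_left _ _
  have hrn : ∀ i, r i ≤ 1/(i+1) := fun i => min_le_right _ _
  -- key choice lemma
  have key : ∀ (i : ℕ) (c : M) (prev : ℕ → M), ∃ y : M,
      Dense (backOrbit f y) ∧ dist y c < r i ∧ ∀ j < i, y ∉ fullOrbit f (prev j) := by
    intro i c prev
    have hres : ({x : M | Dense (backOrbit f x)} ∩
        ⋂ j ∈ Finset.range i, (fullOrbit f (prev j))ᶜ) ∈ residual M := by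
      refine Filter.inter_mem hI ?_
      exact (countable_bInter_mem ((Finset.range i).countable_toSet)).2
        fun j _ => compl_countable_mem_residual hM (Set.countable_range _)
    obtain ⟨y, hy, hyb⟩ := (dense_of_mem_residual hres).exists_mem_open
      isOpen_ball ⟨c, mem_ball_self (hrpos i)⟩
    refine ⟨y, hy.1, mem_ball.1 hyb, fun j hj => ?_⟩
    have := hy.2
    simp only [Finset.mem_range, mem_iInter, mem_compl_iff] at this
    exact this j hj
  choose pickF hp1 hp2 hp3 using key
  -- recursive construction
  set g : ℕ → ℕ → M := fun n =>
    Nat.rec p (fun k ih => Function.update ih k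
      (pickF k (if m k = k then σ k else ih (m k)) ih)) n with hg_def
  set q : ℕ → M := fun i => g (i+1) i with hq_def
  have hg_succ : ∀ n, g (n+1) =
      Function.update (g n) n (pickF n (if m n = n then σ n else g n (m n)) (g n)) :=
    fun n => rfl
  have hg_stable : ∀ n j, j < n → g n j = q j := by
    intro n
    induction n with
    | zero => intro j hj; exact absurd hj (Nat.not_lt_zero j)
    | succ k ih =>
      intro j hj
      rcases Nat.lt_succ_iff_lt_or_eq.1 hj with h | h
      · rw [hg_succ k, Function.update_of_ne (by omega : j ≠ k)]
        exact ih j h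
      · subst h; rfl
  have hqp : ∀ i, q i = pickF i (if m i = i then σ i else g i (m i)) (g i) := by
    intro i
    show g (i+1) i = _
    rw [hg_succ i, Function.update_self]
  -- center
  set ci : ℕ → M := fun i => if m i = i then σ i else q (m i) with hci_def
  have hmain : ∀ i, Dense (backOrbit f (q i)) ∧ dist (q i) (ci i) < r i ∧
      ∀ j < i, q i ∉ fullOrbit f (q j) := by
    intro i
    have hcen : (if m i = i then σ i else g i (m i)) = ci i := by
      rcases eq_or_lt_of_le (hmle i) with h | h
      · simp [hci_def, h]
      · simp only [hci_def, if_neg (Nat.ne_of_lt h)]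
        exact hg_stable i (m i) h
    refine ⟨?_, ?_, ?_⟩
    · rw [hqp i]; exact hp1 _ _ _
    · rw [hqp i, hcen] at *
      rw [← hcen]
      exact hp2 _ _ _
    · intro j hj
      rw [hqp i]
      have := hp3 i (if m i = i then σ i else g i (m i)) (g i) j hj
      rwa [hg_stable i j hj] at this
  -- leaders
  have hSld_fin : {i : ℕ | m i = i}.Finite := by
    apply Set.Finite.of_finite_image (f := σ)
    · exact htf.subset (by rintro _ ⟨i, _, rfl⟩; exact hσt i)
    · intro i hi j hj hij
      have := hmcongr i j hij
      rwa [hi, hj] at this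
  set Lset : Set M := q '' {i : ℕ | m i = i} with hL_def
  have hL_fin : Lset.Finite := hSld_fin.image q
  have hLne : Lset.Nonempty := ⟨q (m 0), ⟨m 0, hmm 0, rfl⟩⟩
  -- distance to p
  have hdist : ∀ i, dist (q i) (p i) < ε := by
    intro i
    rcases eq_or_lt_of_le (hmle i) with h | h
    · have h1 : dist (q i) (σ i) < ε/4 := by
        have := (hmain i).2.1
        rw [hci_def] at this
        simp only [h, if_pos] at this
        exact lt_of_lt_of_le this (hr4 i)
      have h2 : dist (p i) (σ i) < ε/4 := hσd i
      have h3 := dist_triangle (q i) (σ i) (p i)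
      have h4 := dist_comm (p i) (σ i)
      linarith
    · have h1 : dist (q i) (q (m i)) < ε/4 := by
        have := (hmain i).2.1
        rw [hci_def] at this
        simp only [if_neg (Nat.ne_of_lt h)] at this
        exact lt_of_lt_of_le this (hr4 i)
      have h2 : dist (q (m i)) (σ i) < ε/4 := by
        have := (hmain (m i)).2.1
        rw [hci_def] at this
        simp only [hmm i, if_pos] at this
        rw [hmσ i] at this
        exact lt_of_lt_of_le this (hr4 (m i))
      have h3 : dist (p i) (σ i) < ε/4 := hσd i
      have h4 := dist_triangle (q i) (q (m i)) (p i)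
      have h5 := dist_triangle (q (m i)) (σ i) (p i)
      have h6 := dist_comm (p i) (σ i)
      linarith
  -- disjoint orbits
  have hdisj : ∀ i j, i < j → Disjoint (fullOrbit f (q i)) (fullOrbit f (q j)) := by
    intro i j hij
    rw [Set.disjoint_left]
    intro z hz1 hz2
    exact (hmain j).2.2 i hij (fullOrbit_trans (fullOrbit_symm hz2) hz1)
  -- derived set
  have hder : der (Set.range q) ⊆ Lset := by
    intro x hx
    by_contra hxL
    have hδ : 0 < infDist x Lset :=
      (hL_fin.isClosed.notMem_iff_infDist_pos hLne).1 hxL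
    set δ := infDist x Lset with hδ_def
    obtain ⟨N, hN⟩ := exists_nat_one_div_lt (show (0:ℝ) < δ/2 by linarith)
    have hfar : ∀ i, N ≤ i → δ/2 ≤ dist x (q i) := by
      intro i hi
      rcases eq_or_lt_of_le (hmle i) with h | h
      · have : δ ≤ dist x (q i) := infDist_le_dist_of_mem ⟨i, h, rfl⟩
        linarith
      · have h1 : dist (q i) (q (m i)) < 1/(i+1) := by
          have := (hmain i).2.1
          rw [hci_def] at this
          simp only [if_neg (Nat.ne_of_lt h)] at this
          exact lt_of_lt_of_le this (hrn i)
        have h2 : δ ≤ dist x (q (m i)) := infDist_le_dist_of_mem ⟨m i, hmm i, rfl⟩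
        have h3 : (1:ℝ)/(i+1) ≤ 1/(N+1) := by
          apply one_div_le_one_div_of_le
          · positivity
          · have : (N:ℝ) ≤ i := Nat.cast_le.2 hi
            linarith
        have h4 := dist_triangle x (q i) (q (m i))
        linarith
    have hsub : Set.range q \ {x} ⊆ (q '' Set.Iio N \ {x}) ∪ {y | δ/2 ≤ dist x y} := by
      rintro z ⟨⟨i, rfl⟩, hz⟩
      rcases lt_or_ge i N with h | h
      · exact Or.inl ⟨⟨i, h, rfl⟩, hz⟩
      · exact Or.inr (hfar i h)
    have hx' : x ∈ closure ((q '' Set.Iio N \ {x}) ∪ {y | δ/2 ≤ dist x y}) :=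
      closure_mono hsub hx
    rw [closure_union] at hx'
    have hc1 : IsClosed (q '' Set.Iio N \ {x}) :=
      (((Set.finite_Iio N).image q).subset diff_subset).isClosed
    have hc2 : IsClosed {y : M | δ/2 ≤ dist x y} :=
      isClosed_le continuous_const (continuous_const.dist continuous_id)
    rcases hx' with h | h
    · rw [hc1.closure_eq] at h
      exact h.2 rfl
    · rw [hc2.closure_eq] at h
      simp only [mem_setOf_eq, dist_self] at h
      linarith
  have hLsub : Lset ⊆ Set.range q := by
    rintro _ ⟨i, _, rfl⟩; exact ⟨i, rfl⟩
  have hclosed : IsClosed (Set.range q) := by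
    apply isClosed_of_closure_subset
    intro x hx
    by_cases hxr : x ∈ Set.range q
    · exact hxr
    · apply hLsub
      apply hder
      show x ∈ closure (Set.range q \ {x})
      rwa [Set.diff_singleton_eq_self hxr]
  refine ⟨q, hclosed, hL_fin.subset hder, fun i => (hmain i).1, ?_, hdist⟩
  intro i j hij
  rcases hij.lt_or_gt with h | h
  · exact hdisj i j h
  · exact (hdisj j i h).symm
end

section
/- Let M be a compact metric space without isolated points and f a homeomorphism such that the set I of points with dense backward orbit is residual. Then for every x ∈ I and every δ > 0, there exist a sequence {x_n} of points in B_δ(x) with closed range and positive radii {r_n}_{n≥2} such that: x ∈ {x_n}; each x_n has dense backward orbit; the full orbits O(x_i) are pairwise disjoint; and the closed balls cl(B_{r_n}(x_n)) are pairwise disjoint for distinct n,m ≥ 2. -/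
open Metric Filter Set Topology

section aux
variable {M : Type*} [MetricSpace M]

lemma self_mem_fullOrbit (f : M ≃ₜ M) (x : M) : x ∈ fullOrbit f x :=
  ⟨0, by simp⟩

lemma fullOrbit_countable (f : M ≃ₜ M) (x : M) : (fullOrbit f x).Countable :=
  Set.countable_range _

lemma fullOrbit_disjoint (f : M ≃ₜ M) {a b : M} (h : b ∉ fullOrbit f a) :
    Disjoint (fullOrbit f a) (fullOrbit f b) := by
  rw [Set.disjoint_left]
  rintro z ⟨k, hk⟩ ⟨l, hl⟩
  apply h
  refine ⟨k - l, ?_⟩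
  show (f.toEquiv ^ (k - l)) a = b
  simp only at hk hl
  have h1 : (f.toEquiv ^ (k - l)) a = (f.toEquiv ^ (-l)) ((f.toEquiv ^ k) a) := by
    rw [← Equiv.Perm.mul_apply, ← zpow_add]; ring_nf
  rw [h1, hk, ← hl, ← Equiv.Perm.mul_apply, ← zpow_add]
  simp

lemma compl_countable_residual (hM : ∀ x : M, ¬ IsOpen ({x} : Set M))
    {C : Set M} (hC : C.Countable) : Cᶜ ∈ residual M := by
  have h1 : Cᶜ = ⋂ c ∈ C, ({c}ᶜ : Set M) := by
    ext z; simp only [mem_compl_iff, mem_iInter, mem_singleton_iff]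
    constructor
    · intro hz c hc hzc; exact hz (hzc ▸ hc)
    · intro h hz; exact h z hz rfl
  rw [h1]
  exact (countable_bInter_mem hC).2 fun c _ =>
    residual_of_dense_open isOpen_compl_singleton
      (dense_compl_singleton_iff_not_open.2 (hM c))
end aux

theorem stmt4 {M : Type*} [MetricSpace M] [CompactSpace M]
    (hM : ∀ x : M, ¬ IsOpen ({x} : Set M)) (f : M ≃ₜ M)
    (hI : {x : M | Dense (backOrbit f x)} ∈ residual M)
    (x : M) (hx : Dense (backOrbit f x)) (δ : ℝ) (hδ : 0 < δ) :
    ∃ (xs : ℕ → M) (r : ℕ → ℝ),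
      (∀ n, xs n ∈ Metric.ball x δ) ∧
      IsClosed (Set.range xs) ∧
      x ∈ Set.range xs ∧
      (∀ n, Dense (backOrbit f (xs n))) ∧
      (∀ n m, n ≠ m → Disjoint (fullOrbit f (xs n)) (fullOrbit f (xs m))) ∧
      (∀ n, 2 ≤ n → 0 < r n) ∧
      (∀ n m, 2 ≤ n → 2 ≤ m → n ≠ m →
        Disjoint (Metric.closedBall (xs n) (r n)) (Metric.closedBall (xs m) (r m))) := by
  classical
  -- key existence step
  have key : ∀ (C : Set M), C.Countable → ∀ ε : ℝ, 0 < ε →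
      ∃ y : M, Dense (backOrbit f y) ∧ dist y x < ε ∧ y ∉ C := by
    intro C hC ε hε
    have h2 : ({y : M | Dense (backOrbit f y)} ∩ Cᶜ) ∈ residual M :=
      Filter.inter_mem hI (compl_countable_residual hM hC)
    obtain ⟨y, hy, hyb⟩ := (dense_of_mem_residual h2).exists_mem_open isOpen_ball
      ⟨x, mem_ball_self hε⟩
    exact ⟨y, hy.1, mem_ball.1 hyb, hy.2⟩
  -- build the sequence via dependent choice on finsets
  set P : M → Prop := fun a => Dense (backOrbit f a) ∧ dist a x < δ ∧ a ∉ fullOrbit f x with hP_def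
  set R : M → M → Prop := fun a b => b ∉ fullOrbit f a ∧ dist b x ≤ dist a x / 4 with hR_def
  obtain ⟨y, hP, hR⟩ : ∃ y : ℕ → M, (∀ n, P (y n)) ∧ ∀ m n, m < n → R (y m) (y n) := by
    apply exists_seq_of_forall_finset_exists P R
    intro s hs
    have hsx : ∀ a ∈ s, 0 < dist a x := by
      intro a ha
      refine dist_pos.2 fun h => (hs a ha).2.2 ?_
      rw [h]; exact self_mem_fullOrbit f x
    set F : Finset ℝ := insert δ (s.image fun a => dist a x / 4) with hF
    have hFne : F.Nonempty := ⟨δ, Finset.mem_insert_self _ _⟩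
    set ε := F.min' hFne with hεdef
    have hε : 0 < ε := by
      rw [hεdef, Finset.lt_min'_iff]
      intro b hb
      rcases Finset.mem_insert.1 hb with rfl | hb
      · exact hδ
      · obtain ⟨a, ha, rfl⟩ := Finset.mem_image.1 hb
        linarith [hsx a ha]
    have hεδ : ε ≤ δ := Finset.min'_le _ _ (Finset.mem_insert_self _ _)
    have hεa : ∀ a ∈ s, ε ≤ dist a x / 4 := fun a ha =>
      Finset.min'_le _ _ (Finset.mem_insert_of_mem (Finset.mem_image_of_mem _ ha))
    have hC : (fullOrbit f x ∪ ⋃ a ∈ s, fullOrbit f a).Countable :=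
      (fullOrbit_countable f x).union
        ((s.countable_toSet).biUnion fun a _ => fullOrbit_countable f a)
    obtain ⟨z, hz1, hz2, hz3⟩ := key _ hC ε hε
    refine ⟨z, ⟨hz1, lt_of_lt_of_le hz2 hεδ, fun h => hz3 (Or.inl h)⟩, ?_⟩
    intro a ha
    refine ⟨fun h => hz3 (Or.inr (Set.mem_biUnion ha h)), le_trans hz2.le (hεa a ha)⟩
  have hyx : ∀ n, y n ≠ x := by
    intro n h
    exact (hP n).2.2 (h ▸ self_mem_fullOrbit f x)
  have hdp : ∀ n, 0 < dist (y n) x := fun n => dist_pos.2 (hyx n)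
  have hdec : ∀ m n, m < n → dist (y n) x ≤ dist (y m) x / 4 := fun m n h => (hR m n h).2
  -- the sequence
  set xs : ℕ → M := fun n => match n with | 0 => x | Nat.succ k => y k with hxs
  have hxs0 : xs 0 = x := rfl
  have hxsS : ∀ k, xs (k + 1) = y k := fun k => rfl
  -- convergence
  have hgeo : ∀ n, dist (y n) x ≤ dist (y 0) x * (1 / 4) ^ n := by
    intro n
    induction n with
    | zero => simp
    | succ n ih =>
      have := hdec n (n + 1) (Nat.lt_succ_self n)
      calc dist (y (n+1)) x ≤ dist (y n) x / 4 := this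
        _ ≤ dist (y 0) x * (1/4)^n / 4 := by linarith
        _ = dist (y 0) x * (1/4)^(n+1) := by ring
  have hyt : Tendsto y atTop (𝓝 x) := by
    rw [tendsto_iff_dist_tendsto_zero]
    apply squeeze_zero (fun n => dist_nonneg) hgeo
    have h4 : Tendsto (fun n : ℕ => (1 / 4 : ℝ) ^ n) atTop (𝓝 0) :=
      tendsto_pow_atTop_nhds_zero_of_lt_one (by norm_num) (by norm_num)
    have := h4.const_mul (dist (y 0) x)
    simpa using this
  have hxt : Tendsto xs atTop (𝓝 x) := by
    rw [← Filter.tendsto_add_atTop_iff_nat 1]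
    exact hyt
  have hclosed : IsClosed (Set.range xs) := by
    have h1 := hxt.isCompact_insert_range
    have h2 : insert x (Set.range xs) = Set.range xs :=
      Set.insert_eq_self.2 ⟨0, rfl⟩
    rw [h2] at h1
    exact h1.isClosed
  -- orbit nonmembership for m < n
  have hnotmem : ∀ m n, m < n → xs n ∉ fullOrbit f (xs m) := by
    intro m n hmn
    cases n with
    | zero => omega
    | succ n =>
      cases m with
      | zero => exact (hP n).2.2
      | succ m => exact (hR m n (by omega)).1
  refine ⟨xs, fun n => dist (xs n) x / 8, ?_, hclosed, ⟨0, rfl⟩, ?_, ?_, ?_, ?_⟩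
  · intro n
    cases n with
    | zero => exact mem_ball_self hδ
    | succ n => exact mem_ball.2 (hP n).2.1
  · intro n
    cases n with
    | zero => exact hx
    | succ n => exact (hP n).1
  · intro n m hnm
    rcases hnm.lt_or_gt with h | h
    · exact fullOrbit_disjoint f (hnotmem n m h)
    · exact (fullOrbit_disjoint f (hnotmem m n h)).symm
  · intro n hn
    obtain ⟨k, rfl⟩ : ∃ k, n = k + 1 := ⟨n - 1, by omega⟩
    have := hdp k
    simp only [hxsS]
    linarith
  · have hsep : ∀ i j, i < j →
        Disjoint (Metric.closedBall (y i) (dist (y i) x / 8))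
          (Metric.closedBall (y j) (dist (y j) x / 8)) := by
      intro i j hij
      rw [Set.disjoint_left]
      intro z h1 h2
      rw [mem_closedBall] at h1 h2
      have t1 : dist (y i) x ≤ dist (y i) (y j) + dist (y j) x := dist_triangle _ _ _
      have t2 : dist (y i) (y j) ≤ dist (y i) z + dist z (y j) := dist_triangle _ _ _
      have t3 : dist (y i) z = dist z (y i) := dist_comm _ _
      have hij4 := hdec i j hij
      have := hdp i
      linarith
    intro n m hn hm hnm
    obtain ⟨i, rfl⟩ : ∃ i, n = i + 1 := ⟨n - 1, by omega⟩
    obtain ⟨j, rfl⟩ : ∃ j, m = j + 1 := ⟨m - 1, by omega⟩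
    simp only [hxsS]
    rcases (show i ≠ j by omega).lt_or_gt with h | h
    · exact hsep i j h
    · exact (hsep j i h).symm
end

section
/- Let {p_i} be a sequence of pairwise distinct points in a compact metric space M whose range is a closed countable set, and let β be the ordinal with D^β({p_i}) finite nonempty and D^{β+1}({p_i}) = ∅. Then there exist radii ρ¹_1, ρ²_1, … > 0 such that: (1) if p_j, p_k both lie in D^λ({p_i}) \ D^{λ+1}({p_i}) for some λ ≤ β, then the closed balls cl(B(p_j, ρ^j_1)) and cl(B(p_k, ρ^k_1)) are disjoint; and (2) if p_j ∈ D^λ({p_i}) \ D^{λ+1}({p_i}) for some λ < β, then cl(B(p_j, ρ^j_1)) ∩ D^{λ+1}({p_i}) = ∅. -/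
open Metric Filter Set

lemma dIter_zero {M : Type*} [TopologicalSpace M] (A : Set M) : dIter A 0 = A :=
  Ordinal.limitRecOn_zero _ _ _

lemma dIter_succ {M : Type*} [TopologicalSpace M] (A : Set M) (o : Ordinal) :
    dIter A (o + 1) = der (dIter A o) := by
  unfold dIter
  rw [Ordinal.add_one_eq_succ, Ordinal.limitRecOn_succ]

lemma dIter_limit {M : Type*} [TopologicalSpace M] (A : Set M) {o : Ordinal}
    (h : Order.IsSuccLimit o) : dIter A o = ⋂ b : {b : Ordinal // b < o}, dIter A b := by
  unfold dIter
  rw [Ordinal.limitRecOn_limit _ _ _ _ h]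

lemma der_subset_closure {M : Type*} [TopologicalSpace M] (A : Set M) :
    der A ⊆ closure A := fun _ hx => closure_mono diff_subset hx

lemma isClosed_der {M : Type*} [TopologicalSpace M] [T1Space M] (A : Set M) :
    IsClosed (der A) := by
  refine isClosed_of_closure_subset fun x hx => ?_
  show x ∈ closure (A \ {x})
  rw [_root_.mem_closure_iff]
  intro o ho hxo
  obtain ⟨y, hyo, hy⟩ := _root_.mem_closure_iff.1 hx o ho hxo
  rcases eq_or_ne y x with rfl | hne
  · exact _root_.mem_closure_iff.1 hy o ho hyo
  · have ho' : IsOpen (o \ {x}) := ho.sdiff isClosed_singleton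
    obtain ⟨z, hz, hzA⟩ := _root_.mem_closure_iff.1 hy (o \ {x}) ho' ⟨hyo, hne⟩
    exact ⟨z, hz.1, hzA.1, hz.2⟩

lemma dIter_isClosed {M : Type*} [TopologicalSpace M] [T1Space M] {A : Set M}
    (hA : IsClosed A) (o : Ordinal) : IsClosed (dIter A o) := by
  induction o using Ordinal.induction with
  | _ o IH =>
    rcases Ordinal.zero_or_succ_or_isSuccLimit o with rfl | ⟨a, rfl⟩ | hl
    · rwa [dIter_zero]
    · rw [← Ordinal.add_one_eq_succ, dIter_succ]; exact isClosed_der _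
    · rw [dIter_limit A hl]
      exact isClosed_iInter fun b => IH b b.2

lemma dIter_antitone {M : Type*} [TopologicalSpace M] [T1Space M] {A : Set M}
    (hA : IsClosed A) : ∀ a : Ordinal, ∀ b ≤ a, dIter A a ⊆ dIter A b := by
  intro a
  induction a using Ordinal.induction with
  | _ a IH =>
    intro b hb
    rcases Ordinal.zero_or_succ_or_isSuccLimit a with rfl | ⟨c, rfl⟩ | hl
    · rw [nonpos_iff_eq_zero.1 hb]
    · rcases eq_or_lt_of_le hb with rfl | hb'
      · exact subset_rfl
      · have hbc : b ≤ c := Order.lt_succ_iff.1 hb'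
        have h1 : dIter A (Order.succ c) ⊆ dIter A c := by
          rw [← Ordinal.add_one_eq_succ, dIter_succ]
          intro x hx
          have := der_subset_closure (dIter A c) hx
          rwa [(dIter_isClosed hA c).closure_eq] at this
        exact h1.trans (IH c (Order.lt_succ c) b hbc)
    · rcases eq_or_lt_of_le hb with rfl | hb'
      · exact subset_rfl
      · rw [dIter_limit A hl]
        exact iInter_subset_of_subset ⟨b, hb'⟩ subset_rfl

theorem stmt6 {M : Type*} [MetricSpace M] [CompactSpace M]
    (p : ℕ → M) (hinj : Function.Injective p)
    (hclosed : IsClosed (Set.range p)) (hcount : (Set.range p).Countable)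
    (β : Ordinal) (hfin : (dIter (Set.range p) β).Finite)
    (hne : (dIter (Set.range p) β).Nonempty)
    (hempty : dIter (Set.range p) (β + 1) = ∅) :
    ∃ ρ : ℕ → ℝ,
      (∀ i, 0 < ρ i) ∧
      (∀ lam ≤ β, ∀ j k, j ≠ k →
        p j ∈ dIter (Set.range p) lam \ dIter (Set.range p) (lam + 1) →
        p k ∈ dIter (Set.range p) lam \ dIter (Set.range p) (lam + 1) →
        Disjoint (Metric.closedBall (p j) (ρ j)) (Metric.closedBall (p k) (ρ k))) ∧
      (∀ lam < β, ∀ j,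
        p j ∈ dIter (Set.range p) lam \ dIter (Set.range p) (lam + 1) →
        Disjoint (Metric.closedBall (p j) (ρ j)) (dIter (Set.range p) (lam + 1))) := by
  classical
  set R := Set.range p with hR
  have hSne : ∀ j : ℕ, ({o : Ordinal | p j ∉ dIter R (o + 1)}).Nonempty := by
    intro j
    refine ⟨β, ?_⟩
    show p j ∉ dIter R (β + 1)
    rw [hempty]
    exact notMem_empty _
  set rk : ℕ → Ordinal := fun j => Ordinal.lt_wf.min _ (hSne j) with hrk
  have rk_mem : ∀ j, p j ∉ dIter R (rk j + 1) := fun j => Ordinal.lt_wf.min_mem _ (hSne j)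
  have rk_min : ∀ j, ∀ b < rk j, p j ∈ dIter R (b + 1) := by
    intro j b hb
    by_contra h
    exact Ordinal.lt_wf.not_lt_min _ (h : b ∈ {o : Ordinal | p j ∉ dIter R (o + 1)}) hb
  have rk_eq : ∀ j lam, p j ∈ dIter R lam \ dIter R (lam + 1) → rk j = lam := by
    intro j lam hj
    have h1 : ¬ lam < rk j := fun h => hj.2 (rk_min j lam h)
    have h2 : ¬ rk j < lam := by
      intro h
      have hle : rk j + 1 ≤ lam := by
        rw [Ordinal.add_one_eq_succ]; exact Order.succ_le_of_lt h
      exact rk_mem j (dIter_antitone hclosed lam (rk j + 1) hle hj.1)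
    exact le_antisymm (not_lt.1 h1) (not_lt.1 h2)
  have not_mem_A2 : ∀ j, p j ∉ closure (dIter R (rk j) \ {p j}) := by
    intro j h
    exact rk_mem j (by rw [dIter_succ]; exact h)
  have key : ∀ j : ℕ, ∃ r : ℝ, 0 < r ∧
      (∀ y ∈ dIter R (rk j + 1), 3 * r ≤ dist (p j) y) ∧
      (∀ y ∈ closure (dIter R (rk j) \ {p j}), 3 * r ≤ dist (p j) y) := by
    intro j
    obtain ⟨r1, hr1pos, hr1⟩ : ∃ r1 : ℝ, 0 < r1 ∧
        ∀ y ∈ dIter R (rk j + 1), r1 ≤ dist (p j) y := by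
      by_cases h : (dIter R (rk j + 1)).Nonempty
      · exact ⟨Metric.infDist (p j) (dIter R (rk j + 1)),
          ((dIter_isClosed hclosed _).notMem_iff_infDist_pos h).1 (rk_mem j),
          fun y hy => Metric.infDist_le_dist_of_mem hy⟩
      · exact ⟨1, one_pos, fun y hy => absurd ⟨y, hy⟩ h⟩
    obtain ⟨r2, hr2pos, hr2⟩ : ∃ r2 : ℝ, 0 < r2 ∧
        ∀ y ∈ closure (dIter R (rk j) \ {p j}), r2 ≤ dist (p j) y := by
      by_cases h : (closure (dIter R (rk j) \ {p j})).Nonempty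
      · exact ⟨Metric.infDist (p j) (closure (dIter R (rk j) \ {p j})),
          (isClosed_closure.notMem_iff_infDist_pos h).1 (not_mem_A2 j),
          fun y hy => Metric.infDist_le_dist_of_mem hy⟩
      · exact ⟨1, one_pos, fun y hy => absurd ⟨y, hy⟩ h⟩
    refine ⟨min r1 r2 / 3, by positivity, fun y hy => ?_, fun y hy => ?_⟩
    · have := hr1 y hy
      have := min_le_left r1 r2
      linarith
    · have := hr2 y hy
      have := min_le_right r1 r2
      linarith
  choose ρ hρpos hρ1 hρ2 using key
  refine ⟨ρ, hρpos, ?_, ?_⟩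
  · intro lam _ j k hjk hj hk
    have hrj : rk j = lam := rk_eq j lam hj
    have hrkk : rk k = lam := rk_eq k lam hk
    have hpjk : p j ≠ p k := fun h => hjk (hinj h)
    have hmemj : p k ∈ closure (dIter R (rk j) \ {p j}) := by
      rw [hrj]
      exact subset_closure ⟨hk.1, fun h => hpjk ((h : p k = p j)).symm⟩
    have hmemk : p j ∈ closure (dIter R (rk k) \ {p k}) := by
      rw [hrkk]
      exact subset_closure ⟨hj.1, hpjk⟩
    have h1 : 3 * ρ j ≤ dist (p j) (p k) := hρ2 j _ hmemj
    have h2 : 3 * ρ k ≤ dist (p j) (p k) := by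
      have := hρ2 k _ hmemk
      rwa [dist_comm] at this
    apply Metric.closedBall_disjoint_closedBall
    have := dist_pos.2 hpjk
    linarith
  · intro lam _ j hj
    have hrj : rk j = lam := rk_eq j lam hj
    rw [Set.disjoint_right]
    intro y hy hby
    have hyA : y ∈ dIter R (rk j + 1) := by rw [hrj]; exact hy
    have h1 : 3 * ρ j ≤ dist (p j) y := hρ1 j y hyA
    have h2 : dist y (p j) ≤ ρ j := Metric.mem_closedBall.1 hby
    rw [dist_comm] at h2
    have := hρpos j
    linarith
end

section
/- Let {p_i} be a sequence of distinct points in a compact metric space M with closed countable range. For any family of strictly decreasing positive sequences {a^i_n}_{n∈ℕ} with lim_n a^i_n = 0 for each i, there exist natural numbers N_i such that the tail radii ρ^i_n = a^i_{N_i + n} satisfy the separation conditions: balls around points of the same Cantor–Bendixson rank level have disjoint closures, and the closed ball around a point of rank λ < β is disjoint from D^{λ+1}({p_i}). -/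
open Metric Filter Set

lemma der_eq_derivedSet {M : Type*} [TopologicalSpace M] (A : Set M) : der A = derivedSet A := by
  ext x
  rw [der, Set.mem_setOf_eq, mem_closure_iff_nhds, mem_derivedSet, accPt_iff_nhds]
  constructor
  · intro h U hU; obtain ⟨y, hyU, hyA, hyx⟩ := h U hU; exact ⟨y, ⟨hyU, hyA⟩, hyx⟩
  · intro h U hU; obtain ⟨y, ⟨hyU, hyA⟩, hyx⟩ := h U hU; exact ⟨y, hyU, hyA, hyx⟩

lemma dIter_anti {M : Type*} [TopologicalSpace M] [T1Space M] {A : Set M}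
    (hA : IsClosed A) : ∀ {l m : Ordinal}, l ≤ m → dIter A m ⊆ dIter A l := by
  intro l m
  induction m using Ordinal.limitRecOn with
  | zero => intro h; rw [nonpos_iff_eq_zero.mp h]
  | add_one o ih =>
    intro h
    rcases Order.le_succ_iff_eq_or_le.mp h with rfl | h
    · exact subset_rfl
    · refine subset_trans ?_ (ih h)
      rw [dIter_succ, der_eq_derivedSet]
      exact (derivedSet_subset_closure _).trans (dIter_isClosed hA o).closure_subset
  | limit o ho ih =>
    intro h
    rcases eq_or_lt_of_le h with rfl | h
    · exact subset_rfl
    · rw [dIter_limit A ho]; exact Set.iInter_subset_of_subset ⟨l, h⟩ subset_rfl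

theorem stmt7 {M : Type*} [MetricSpace M] [CompactSpace M]
    (p : ℕ → M) (hinj : Function.Injective p)
    (hclosed : IsClosed (Set.range p)) (hcount : (Set.range p).Countable)
    (β : Ordinal) (hfin : (dIter (Set.range p) β).Finite)
    (hne : (dIter (Set.range p) β).Nonempty)
    (hempty : dIter (Set.range p) (β + 1) = ∅)
    (a : ℕ → ℕ → ℝ) (hpos : ∀ i n, 0 < a i n) (hanti : ∀ i, StrictAnti (a i))
    (hlim : ∀ i, Filter.Tendsto (a i) Filter.atTop (nhds 0)) :
    ∃ N : ℕ → ℕ,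
      (∀ lam ≤ β, ∀ j k, j ≠ k →
        p j ∈ dIter (Set.range p) lam \ dIter (Set.range p) (lam + 1) →
        p k ∈ dIter (Set.range p) lam \ dIter (Set.range p) (lam + 1) →
        Disjoint (Metric.closedBall (p j) (a j (N j + 1)))
          (Metric.closedBall (p k) (a k (N k + 1)))) ∧
      (∀ lam < β, ∀ j,
        p j ∈ dIter (Set.range p) lam \ dIter (Set.range p) (lam + 1) →
        Disjoint (Metric.closedBall (p j) (a j (N j + 1))) (dIter (Set.range p) (lam + 1))) := by
  classical
  have huniq : ∀ j (l m : Ordinal),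
      p j ∈ dIter (Set.range p) l \ dIter (Set.range p) (l + 1) →
      p j ∈ dIter (Set.range p) m \ dIter (Set.range p) (m + 1) → l = m := by
    intro j l m hl hm
    by_contra hne'
    rcases lt_or_gt_of_ne hne' with h | h
    · exact hl.2 (dIter_anti hclosed
        (by rw [← Order.succ_eq_add_one]; exact Order.succ_le_of_lt h) hm.1)
    · exact hm.2 (dIter_anti hclosed
        (by rw [← Order.succ_eq_add_one]; exact Order.succ_le_of_lt h) hl.1)
  have hkey : ∀ j, ∃ ε > 0, ∀ lam,
      p j ∈ dIter (Set.range p) lam \ dIter (Set.range p) (lam + 1) →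
      ∀ y ∈ dIter (Set.range p) lam, y ≠ p j → ε ≤ dist (p j) y := by
    intro j
    by_cases h : ∃ lam, p j ∈ dIter (Set.range p) lam \ dIter (Set.range p) (lam + 1)
    · obtain ⟨l0, hl0⟩ := h
      have hnc : p j ∉ closure (dIter (Set.range p) l0 \ {p j}) := by
        intro hc
        exact hl0.2 (by rw [dIter_succ]; exact hc)
      rw [Metric.mem_closure_iff] at hnc
      push_neg at hnc
      obtain ⟨ε, hε, hba⟩ := hnc
      refine ⟨ε, hε, ?_⟩
      intro lam hlam y hy hyne
      have heq : lam = l0 := huniq j lam l0 hlam hl0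
      subst heq
      exact hba y ⟨hy, hyne⟩
    · exact ⟨1, one_pos, fun lam hlam => absurd ⟨lam, hlam⟩ h⟩
  choose ε hεpos hεkey using hkey
  have hN : ∀ j, ∃ n, a j (n + 1) < ε j / 2 := by
    intro j
    have hev := (hlim j).eventually (gt_mem_nhds (half_pos (hεpos j)))
    rw [eventually_atTop] at hev
    obtain ⟨n0, hn0⟩ := hev
    exact ⟨n0, hn0 (n0 + 1) (Nat.le_succ n0)⟩
  choose N hNlt using hN
  refine ⟨N, ?_, ?_⟩
  · intro lam hlam j k hjk hj hk
    rw [Set.disjoint_left]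
    intro y hyj hyk
    have e1 : ε j ≤ dist (p j) (p k) :=
      hεkey j lam hj (p k) hk.1 (fun h => hjk (hinj h).symm)
    have e2 : ε k ≤ dist (p k) (p j) :=
      hεkey k lam hk (p j) hj.1 (fun h => hjk (hinj h))
    rw [mem_closedBall] at hyj hyk
    have t1 : dist (p j) (p k) ≤ dist (p j) y + dist y (p k) := dist_triangle _ _ _
    have c1 : dist (p j) y = dist y (p j) := dist_comm _ _
    have c2 : dist (p k) (p j) = dist (p j) (p k) := dist_comm _ _
    have h1 := hNlt j
    have h2 := hNlt k
    linarith
  · intro lam hlam j hj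
    rw [Set.disjoint_left]
    intro y hyj hyD
    have hyD' : y ∈ dIter (Set.range p) lam :=
      dIter_anti hclosed (le_self_add) hyD
    have hyne : y ≠ p j := fun h => hj.2 (h ▸ hyD)
    have hle := hεkey j lam hj y hyD' hyne
    rw [mem_closedBall, dist_comm] at hyj
    have h1 := hNlt j
    have h2 := hεpos j
    linarith
end

section
/- Let M be a compact metric space without isolated points and f : M → M a homeomorphism. If the closure of the range of {p_i} is somewhere dense (its closure contains a nonempty open set), then for every choice of radii {ρ^i_n} strictly decreasing to 0, the system is not completely indecisive: in fact, if p_i is a point of the sequence lying in the interior of cl({p_j}), then 𝔗(i) is of first category in M, so 𝔗 = ⋂_j 𝔗(j) is not residual. -/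
open Metric Filter Set

/-- Key step: if the ball `B(p i, r)` lies in the closure of the range of `p`, then the
ball minus all the other balls is nowhere dense. -/
lemma key_nwd {M : Type*} [MetricSpace M] (hM : ∀ x : M, ¬ IsOpen ({x} : Set M))
    (p : ℕ → M) (i : ℕ) (r : ℝ) (s : ℕ → ℝ) (hs : ∀ j, 0 < s j)
    (hB : Metric.ball (p i) r ⊆ closure (Set.range p)) :
    IsNowhereDense (Metric.ball (p i) r \ ⋃ j, ⋃ (_ : j ≠ i), Metric.ball (p j) (s j)) := by
  set E := Metric.ball (p i) r \ ⋃ j, ⋃ (_ : j ≠ i), Metric.ball (p j) (s j) with hE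
  rw [IsNowhereDense, eq_empty_iff_forall_notMem]
  intro x hx
  set V0 := interior (closure E) with hV0
  have hV0open : IsOpen V0 := isOpen_interior
  have hV0sub : V0 ⊆ closure E := interior_subset
  have hxB : x ∈ closure (Metric.ball (p i) r) :=
    closure_mono diff_subset (hV0sub hx)
  -- find y ∈ V0 ∩ ball
  obtain ⟨y, hyV0, hyB⟩ := (_root_.mem_closure_iff.mp hxB) V0 hV0open hx
  set V := V0 ∩ Metric.ball (p i) r with hV
  have hVopen : IsOpen V := hV0open.inter isOpen_ball
  have hyV : y ∈ V := ⟨hyV0, hyB⟩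
  have hVcl : V ⊆ closure (Set.range p) := fun z hz => hB hz.2
  -- find z ∈ V, z ≠ p i
  have hex : ∃ z ∈ V, z ≠ p i := by
    by_contra h
    push_neg at h
    have : V = {p i} := by
      apply Subset.antisymm (fun z hz => h z hz)
      intro z hz
      have hz' : z = p i := hz
      rw [hz', ← h y hyV]; exact hyV
    exact hM (p i) (this ▸ hVopen)
  obtain ⟨z, hzV, hzne⟩ := hex
  have hzcl : z ∈ closure (Set.range p) := hVcl hzV
  obtain ⟨w, ⟨hwV, hwne⟩, hwrange⟩ := (_root_.mem_closure_iff.mp hzcl)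
    (V ∩ {p i}ᶜ) (hVopen.inter isClosed_singleton.isOpen_compl) ⟨hzV, hzne⟩
  obtain ⟨j, rfl⟩ := hwrange
  have hji : j ≠ i := fun h => hwne (by rw [h]; exact rfl)
  have hpjO : p j ∈ V0 ∩ Metric.ball (p j) (s j) := ⟨hwV.1, mem_ball_self (hs j)⟩
  obtain ⟨e, ⟨heV0, heBj⟩, heE⟩ := (_root_.mem_closure_iff.mp (hV0sub hwV.1))
    (V0 ∩ Metric.ball (p j) (s j)) (hV0open.inter isOpen_ball) hpjO
  exact heE.2 (mem_iUnion.mpr ⟨j, mem_iUnion.mpr ⟨hji, heBj⟩⟩)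

lemma nwd_meagre {X : Type*} [TopologicalSpace X] {s : Set X} (h : IsNowhereDense s) :
    IsMeagre s := by
  rw [isMeagre_iff_countable_union_isNowhereDense]
  exact ⟨{s}, by simpa using h, countable_singleton s, by simp⟩

lemma nwd_preimage {X : Type*} [TopologicalSpace X] (g : X ≃ₜ X) {s : Set X}
    (h : IsNowhereDense s) : IsNowhereDense (g ⁻¹' s) := by
  have e : (g : X → X) ⁻¹' s = g.symm '' s := (g.symm.toEquiv.image_eq_preimage_symm s).symm
  rw [IsNowhereDense, e, ← g.symm.image_closure, ← g.symm.image_interior, h, image_empty]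

lemma nwd_iter_preimage {X : Type*} [TopologicalSpace X] (g : X ≃ₜ X) {s : Set X}
    (h : IsNowhereDense s) (k : ℕ) : IsNowhereDense ((⇑g)^[k] ⁻¹' s) := by
  induction k with
  | zero => simpa using h
  | succ n ih =>
    rw [Function.iterate_succ, preimage_comp]
    exact nwd_preimage g ih

lemma TT_meagre {M : Type*} [MetricSpace M]
    (hM : ∀ x : M, ¬ IsOpen ({x} : Set M)) (f : M ≃ₜ M) (p : ℕ → M)
    (ρ : ℕ → ℕ → ℝ) (hpos : ∀ i n, 0 < ρ i n)
    (hlim : ∀ i, Filter.Tendsto (ρ i) Filter.atTop (nhds 0))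
    (i : ℕ) (hpi : p i ∈ interior (closure (Set.range p))) :
    IsMeagre (TT f p ρ i) := by
  obtain ⟨ε, hε, hball⟩ := Metric.mem_nhds_iff.mp
    (isOpen_interior.mem_nhds hpi)
  obtain ⟨N, hN⟩ := eventually_atTop.mp ((hlim i).eventually (gt_mem_nhds hε))
  set E : ℕ → Set M := fun n =>
    Metric.ball (p i) (ρ i n) \ ⋃ j, ⋃ (_ : j ≠ i), Metric.ball (p j) (ρ j n) with hEdef
  have hnwd : ∀ n ≥ N, IsNowhereDense (E n) := by
    intro n hn
    refine key_nwd hM p i _ _ (fun j => hpos j n) ?_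
    calc Metric.ball (p i) (ρ i n) ⊆ Metric.ball (p i) ε :=
          Metric.ball_subset_ball (le_of_lt (hN n hn))
      _ ⊆ interior (closure (Set.range p)) := hball
      _ ⊆ closure (Set.range p) := interior_subset
  have hcover : TT f p ρ i ⊆ ⋃ m : ℕ, ⋃ k : ℕ, (⇑f)^[k] ⁻¹' E (N + m) := by
    intro x hx
    obtain ⟨n, hnS, hNn⟩ := hx.exists_gt N
    obtain ⟨k, hk1, hk2⟩ := hnS
    refine mem_iUnion.mpr ⟨n - N, mem_iUnion.mpr ⟨k, ?_⟩⟩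
    have hNn' : N + (n - N) = n := by omega
    rw [mem_preimage, hNn']
    exact ⟨hk1, fun hmem => by
      obtain ⟨j, hj⟩ := mem_iUnion.mp hmem
      obtain ⟨hji, hjb⟩ := mem_iUnion.mp hj
      exact hk2 k le_rfl j hji hjb⟩
  refine IsMeagre.mono hcover (isMeagre_iUnion fun m => isMeagre_iUnion fun k => ?_)
  exact nwd_meagre (nwd_iter_preimage f (hnwd (N + m) (Nat.le_add_right N m)) k)

theorem stmt18 {M : Type*} [MetricSpace M] [CompactSpace M] [Nonempty M]
    (hM : ∀ x : M, ¬ IsOpen ({x} : Set M)) (f : M ≃ₜ M)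
    (p : ℕ → M)
    (hsd : (interior (closure (Set.range p))).Nonempty)
    (ρ : ℕ → ℕ → ℝ) (hpos : ∀ i n, 0 < ρ i n) (hanti : ∀ i, StrictAnti (ρ i))
    (hlim : ∀ i, Filter.Tendsto (ρ i) Filter.atTop (nhds 0)) :
    (∀ i, p i ∈ interior (closure (Set.range p)) → IsMeagre (TT f p ρ i)) ∧
    (⋂ i, TT f p ρ i) ∉ residual M := by
  refine ⟨fun i hpi => TT_meagre hM f p ρ hpos hlim i hpi, ?_⟩
  intro hres
  -- find some `i₀` with `p i₀` in the interior of the closure of the range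
  obtain ⟨x, hx⟩ := hsd
  have hxcl : x ∈ closure (Set.range p) := interior_subset hx
  obtain ⟨y, hyI, hyr⟩ := (_root_.mem_closure_iff.mp hxcl) _ isOpen_interior hx
  obtain ⟨i₀, rfl⟩ := hyr
  have hmeagre : IsMeagre (⋂ i, TT f p ρ i) :=
    (TT_meagre hM f p ρ hpos hlim i₀ hyI).mono (iInter_subset _ i₀)
  have hempty : (∅ : Set M) ∈ residual M := by
    have := Filter.inter_mem hres hmeagre
    rwa [inter_compl_self] at this
  have hdense : Dense (∅ : Set M) := dense_of_mem_residual hempty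
  obtain ⟨z⟩ := ‹Nonempty M›
  simpa using hdense z
end
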